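/- arXiv:2605.02479 — 5 statements merged into one kernel-verified Lean document; each statement's English description precedes it below -/
import Mathlib

section
/- Let m ≥ 3 be an odd integer. For every i ∈ {1,…,m}, the identity Σ_{j≠i} z_{ij}·P_j = 0 holds in R = 𝔽₂[z_e : e ∈ E]. (This is the relation Pᵗ·A = 0 coming from the exactness of the Buchsbaum–Eisenbud Pfaffian resolution, written in characteristic 2.) -/
open scoped Classical

noncomputable section

/-- The edges of the complete graph `K_m`: 2-element subsets of `Fin m`. -/
abbrev Edge (m : ℕ) := {e : Sym2 (Fin m) // ¬ e.IsDiag}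

/-- The polynomial ring `𝔽₂[z_e : e ∈ E]`. -/
abbrev R2 (m : ℕ) := MvPolynomial (Edge m) (ZMod 2)

/-- The variable `z_{ij}`, with the convention `z_{ii} = 0`. -/
def Zv (m : ℕ) (i j : Fin m) : R2 m :=
  if h : i = j then 0
  else MvPolynomial.X ⟨s(i, j), by simp only [Sym2.mk_isDiag_iff]; exact h⟩

/-- `M` is a perfect matching of the vertex set `T`. -/
def IsPM (m : ℕ) (T : Finset (Fin m)) (M : Finset (Edge m)) : Prop :=
  (∀ v : Fin m, v ∈ T ↔ ∃ e ∈ M, v ∈ e.val) ∧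
  (∀ e ∈ M, ∀ f ∈ M, ∀ v : Fin m, v ∈ e.val → v ∈ f.val → e = f)

/-- The sum, over all perfect matchings `M` of `T`, of the monomial `∏_{e ∈ M} z_e`. -/
def matchSum (m : ℕ) (T : Finset (Fin m)) : R2 m :=
  ∑ M ∈ Finset.univ.filter (IsPM m T), ∏ e ∈ M, MvPolynomial.X e

/-- The (characteristic 2) Pfaffian `P_i`. -/
def P (m : ℕ) (i : Fin m) : R2 m := matchSum m (Finset.univ.erase i)

/-- `H₀ = Σ_{i<j} z_{ij} P_i P_j`. -/
def H0 (m : ℕ) : R2 m :=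
  ∑ p ∈ Finset.univ.filter (fun p : Fin m × Fin m => p.1 < p.2),
    Zv m p.1 p.2 * P m p.1 * P m p.2

theorem Zv_symm (m : ℕ) (i j : Fin m) : Zv m i j = Zv m j i := by
  unfold Zv
  rcases eq_or_ne i j with h | h
  · subst h; rfl
  · rw [dif_neg h, dif_neg (Ne.symm h)]
    congr 1
    exact Subtype.ext (Sym2.eq_swap)

/-- The differential operator `D_k = Σ_{{u,v} ∈ E, k ∉ {u,v}} z_{uk} z_{kv} ∂/∂z_{uv}`. -/
def D (m : ℕ) (k : Fin m) (f : R2 m) : R2 m :=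
  ∑ e ∈ Finset.univ.filter (fun e : Edge m => k ∉ e.val),
    Sym2.lift ⟨fun u v => Zv m u k * Zv m k v,
      fun u v => by simp only []; rw [Zv_symm m u k, Zv_symm m k v, mul_comm]⟩ e.val *
    MvPolynomial.pderiv e f

/-- `C` is the edge set of a cycle of length `n` in `K_m`. -/
def IsCycleEdges (m n : ℕ) (C : Finset (Edge m)) : Prop :=
  3 ≤ n ∧ ∃ f : ℕ → Fin m,
    (∀ s t, s < n → t < n → f s = f t → s = t) ∧
    (∀ e : Edge m, e ∈ C ↔ ∃ t < n, e.val = s(f t, f ((t + 1) % n)))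

/-- The set of vertices covered by a set of edges. -/
def vertsOf (m : ℕ) (S : Finset (Edge m)) : Finset (Fin m) :=
  Finset.univ.filter (fun v => ∃ e ∈ S, v ∈ e.val)

/-- The degree of the multigraph with edge multiplicities `w` at the vertex `v`. -/
def degw (m : ℕ) (w : Edge m → ℕ) (v : Fin m) : ℕ :=
  ∑ e : Edge m, if v ∈ e.val then w e else 0

/-- `w` is `2`-regular and the connected components of the multigraph with edge
multiplicities `w` are a single odd cycle together with a collection of doubled edges. -/
def memOC (m : ℕ) (w : Edge m → ℕ) : Prop :=
  (∀ v : Fin m, degw m w v = 2) ∧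
  ∃ (n : ℕ) (C M : Finset (Edge m)), Odd n ∧ IsCycleEdges m n C ∧
    IsPM m (Finset.univ \ vertsOf m C) M ∧
    ∀ e : Edge m, w e = if e ∈ C then 1 else if e ∈ M then 2 else 0

/-!
Pair each term `z_{ij} ∏_{e ∈ M} z_e` of `Σ_j z_{ij} P_j` with another one: the vertex `i` is matched
in `M` to some `a ≠ j`, and trading the edge `{i, a}` for `{i, j}` turns `M` into a perfect matching
`M'` of the vertices other than `a` with `z_{ij} ∏_M z_e = z_{ia} ∏_{M'} z_e`. Trading back recovers
`(j, M)`, so the terms cancel in pairs over `𝔽₂`.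
-/

open Finset MvPolynomial

theorem Finset.mul_prod_eq_mul_prod_insert_erase {ι M : Type*} [CommMonoid M] [DecidableEq ι]
    {s : Finset ι} {a b : ι} (f : ι → M) (ha : a ∈ s) (hb : b ∉ s) :
    f b * ∏ x ∈ s, f x = f a * ∏ x ∈ insert b (s.erase a), f x := by
  rw [prod_insert fun h => hb (mem_of_mem_erase h), ← mul_prod_erase s f ha, mul_left_comm]

variable {m : ℕ}

def Edge.ofNe {i j : Fin m} (h : i ≠ j) : Edge m :=
  ⟨s(i, j), Sym2.mk_isDiag_iff.not.mpr h⟩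

@[simp]
theorem Edge.ofNe_val {i j : Fin m} (h : i ≠ j) : (Edge.ofNe h).val = s(i, j) := rfl

theorem Zv_of_ne {i j : Fin m} (h : i ≠ j) : Zv m i j = X (Edge.ofNe h) := dif_neg h

namespace IsPM

variable {T : Finset (Fin m)} {M : Finset (Edge m)}

theorem exists_mem_of_mem (hM : IsPM m T M) {v : Fin m} (hv : v ∈ T) : ∃ e ∈ M, v ∈ e.val :=
  (hM.1 v).1 hv

theorem mem_of_mem_edge (hM : IsPM m T M) {v : Fin m} {e : Edge m} (he : e ∈ M)
    (hv : v ∈ e.val) : v ∈ T :=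
  (hM.1 v).2 ⟨e, he, hv⟩

theorem eq_of_mem_of_mem (hM : IsPM m T M) {v : Fin m} {e f : Edge m} (he : e ∈ M) (hf : f ∈ M)
    (hve : v ∈ e.val) (hvf : v ∈ f.val) : e = f :=
  hM.2 e he f hf v hve hvf

theorem edge_ofNe_notMem (hM : IsPM m T M) {i j : Fin m} (hj : j ∉ T) (hij : i ≠ j) : Edge.ofNe hij ∉ M :=
  fun h => hj (hM.mem_of_mem_edge h (by simp))

theorem exists_mem_erase_iff (hM : IsPM m T M) {e : Edge m} (he : e ∈ M) {v : Fin m} :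
    (∃ f ∈ M.erase e, v ∈ f.val) ↔ v ∈ T ∧ v ∉ e.val := by
  constructor
  · rintro ⟨f, hf, hvf⟩
    exact ⟨hM.mem_of_mem_edge (mem_of_mem_erase hf) hvf,
      fun hve => ne_of_mem_erase hf (hM.eq_of_mem_of_mem (mem_of_mem_erase hf) he hvf hve)⟩
  · rintro ⟨hvT, hve⟩
    obtain ⟨f, hf, hvf⟩ := hM.exists_mem_of_mem hvT
    exact ⟨f, mem_erase.mpr ⟨fun hfe => hve (hfe ▸ hvf), hf⟩, hvf⟩

theorem exchange (hM : IsPM m T M) {i a j : Fin m} {e : Edge m} (he : e ∈ M)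
    (hea : e.val = s(i, a)) (hj : j ∉ T) (hij : i ≠ j) :
    IsPM m (insert j (T.erase a)) (insert (Edge.ofNe hij) (M.erase e)) := by
  have hie : i ∈ e.val := hea ▸ Sym2.mem_mk_left i a
  have hiT : i ∈ T := hM.mem_of_mem_edge he hie
  have hia : i ≠ a := by rintro rfl; exact e.prop (hea ▸ Sym2.mk_isDiag_iff.mpr rfl)
  have hcover : ∀ v, (∃ f ∈ M.erase e, v ∈ f.val) ↔ v ∈ T ∧ v ≠ i ∧ v ≠ a := fun v => by
    rw [hM.exists_mem_erase_iff he, hea, Sym2.mem_iff, not_or]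
  have hdisj : ∀ g ∈ M.erase e, ∀ v ∈ (Edge.ofNe hij).val, v ∉ g.val := fun g hg v hv hvg => by
    obtain ⟨hvT, hvi, -⟩ := (hcover v).mp ⟨g, hg, hvg⟩
    rcases Sym2.mem_iff.mp hv with rfl | rfl
    exacts [hvi rfl, hj hvT]
  refine ⟨fun v => ?_, fun f hf g hg v hvf hvg => ?_⟩
  · rw [exists_mem_insert, hcover, Edge.ofNe_val, Sym2.mem_iff, mem_insert, mem_erase]
    grind
  · rcases mem_insert.mp hf with rfl | hf <;> rcases mem_insert.mp hg with rfl | hg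
    · rfl
    · exact (hdisj g hg v hvf hvg).elim
    · exact (hdisj f hf v hvg hvf).elim
    · exact hM.eq_of_mem_of_mem (mem_of_mem_erase hf) (mem_of_mem_erase hg) hvf hvg

end IsPM

/-- The pair `⟨j, M⟩` stands for the term `z_{ij} ∏_{e ∈ M} z_e`. -/
def exchangeAt (i : Fin m) (p : Σ _ : Fin m, Finset (Edge m)) : Σ _ : Fin m, Finset (Edge m) :=
  if h : i ≠ p.1 ∧ ∃ e ∈ p.2, i ∈ e.val then
    ⟨Sym2.Mem.other h.2.choose_spec.2, insert (Edge.ofNe h.1) (p.2.erase h.2.choose)⟩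
  else p

theorem IsPM.exchangeAt_eq {T : Finset (Fin m)} {M : Finset (Edge m)} (hM : IsPM m T M)
    {i a j : Fin m} {e : Edge m} (he : e ∈ M) (hea : e.val = s(i, a)) (hij : i ≠ j) :
    exchangeAt i ⟨j, M⟩ = ⟨a, insert (Edge.ofNe hij) (M.erase e)⟩ := by
  have hie : i ∈ e.val := hea ▸ Sym2.mem_mk_left i a
  have hcond : i ≠ j ∧ ∃ e ∈ M, i ∈ e.val := ⟨hij, e, he, hie⟩
  have hchoose : hcond.2.choose = e :=
    hM.eq_of_mem_of_mem hcond.2.choose_spec.1 he hcond.2.choose_spec.2 hie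
  have hother : Sym2.Mem.other hcond.2.choose_spec.2 = a := by
    rw [← Sym2.congr_right (a := i), Sym2.other_spec, hchoose, hea]
  rw [exchangeAt, dif_pos hcond, hother, hchoose]

theorem exchangeAt_spec {i j : Fin m} {M : Finset (Edge m)} (hij : i ≠ j)
    (hM : IsPM m (univ.erase j) M) :
    ∃ (a : Fin m) (M' : Finset (Edge m)), a ≠ j ∧ i ≠ a ∧ IsPM m (univ.erase a) M' ∧
      exchangeAt i ⟨j, M⟩ = ⟨a, M'⟩ ∧ exchangeAt i ⟨a, M'⟩ = ⟨j, M⟩ ∧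
      Zv m i j * ∏ e ∈ M, X e = Zv m i a * ∏ e ∈ M', X e := by
  have hj : j ∉ univ.erase j := notMem_erase j univ
  obtain ⟨e, he, hie⟩ := hM.exists_mem_of_mem (mem_erase.mpr ⟨hij, mem_univ i⟩)
  set a := Sym2.Mem.other hie
  have hea : e.val = s(i, a) := (Sym2.other_spec hie).symm
  have hia : i ≠ a := (Sym2.other_ne e.prop hie).symm
  have haj : a ≠ j := ne_of_mem_erase (hM.mem_of_mem_edge he (Sym2.other_mem hie))
  have hofNe : Edge.ofNe hia = e := Subtype.ext hea.symm
  set M' := insert (Edge.ofNe hij) (M.erase e)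
  have hM' : IsPM m (univ.erase a) M' := by
    have := hM.exchange he hea hj hij
    rwa [erase_right_comm, insert_erase (mem_erase.mpr ⟨haj.symm, mem_univ j⟩)] at this
  refine ⟨a, M', haj, hia, hM', hM.exchangeAt_eq he hea hij, ?_, ?_⟩
  · rw [hM'.exchangeAt_eq (mem_insert_self _ _) (Edge.ofNe_val hij) hia, hofNe, erase_insert
      (fun h => hM.edge_ofNe_notMem hj hij (mem_of_mem_erase h)), insert_erase he]
  · rw [Zv_of_ne hij, Zv_of_ne hia, hofNe]
    exact mul_prod_eq_mul_prod_insert_erase X he (hM.edge_ofNe_notMem hj hij)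

theorem pfaffian_relation_general (m : ℕ) (i : Fin m) :
    ∑ j ∈ Finset.univ.erase i, Zv m i j * P m j = 0 := by
  simp only [P, matchSum, mul_sum]
  rw [sum_sigma']
  refine sum_involution (fun p _ => exchangeAt i p) ?_ ?_ ?_ ?_
  all_goals
    rintro ⟨j, M⟩ hp
    obtain ⟨hj, hM⟩ := mem_sigma.mp hp
    obtain ⟨a, M', haj, hia, hM', hto, hback, hweight⟩ :=
      exchangeAt_spec (ne_of_mem_erase hj).symm (mem_filter.mp hM).2
  · rw [hto, ← hweight]
    exact CharTwo.add_self_eq_zero _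
  · simp [hto, haj]
  · simp [hto, hia.symm, hM']
  · simp only [hto, hback]

/-- For every `i`, `Σ_{j ≠ i} z_{ij}·P_j = 0` in `𝔽₂[z_e : e ∈ E]`. -/
theorem pfaffian_relation (m : ℕ) (hm : 3 ≤ m) (hmodd : Odd m) (i : Fin m) :
    ∑ j ∈ Finset.univ.erase i, Zv m i j * P m j = 0 :=
  pfaffian_relation_general m i
end
end

section
/- Let m ≥ 3 be an odd integer and H_0 := Σ_{1≤i<j≤m} z_{ij}·P_i·P_j ∈ R = 𝔽₂[z_e : e ∈ E]. Then H_0 is 2-conducting: for every a : E → ℕ with Σ_{e∈E} a(e) ≥ m−3, there exists μ : E → ℕ that is the exponent vector of a monomial appearing with nonzero coefficient in H_0, such that (i) a(e) + 1 − μ(e) ≥ 0 for every e ∈ E, and (ii) any exponent vector μ′ of a monomial appearing with nonzero coefficient in H_0 satisfying μ(e) ≡ μ′(e) (mod 2) for all e ∈ E must equal μ. -/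
open scoped Classical

noncomputable section

/-! Let `C = {{u, u + 1} : u ∈ Fin m}` be the Hamiltonian cycle and take `μ = 𝟙_C`. A term
`z_{ij} · ∏ M₁ · ∏ M₂` of `H₀` equals `z^C` only if `{i, j} = {k, k + 1}` is an edge of `C` and
`M₁`, `M₂` are perfect matchings of `C - i`, `C - j` inside `C`; since `C - i` is a path on an even
number of vertices, its only perfect matching takes every other edge, and for
`{i, j} = {k, k + 1}` these three pieces do partition `C`. Hence the coefficient of `z^C` in `H₀`
is `m ≡ 1 (mod 2)`. As `H₀` is homogeneous of degree `m = |C|`, an exponent vector of `H₀` that is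
congruent to `𝟙_C` mod `2` dominates `𝟙_C` and has the same degree, so it equals `𝟙_C`; and
`𝟙_C ≤ 1 ≤ a + 1` trivially. -/

open MvPolynomial Finset

section IndicatorVec

variable {σ : Type*}

def indicatorVec (S : Finset σ) : σ →₀ ℕ := ∑ e ∈ S, Finsupp.single e 1

lemma indicatorVec_apply (S : Finset σ) (e : σ) :
    indicatorVec S e = if e ∈ S then 1 else 0 := by
  simp [indicatorVec, Finsupp.finsetSum_apply, Finsupp.single_apply]

lemma indicatorVec_le_one (S : Finset σ) (e : σ) : indicatorVec S e ≤ 1 := by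
  rw [indicatorVec_apply]; split_ifs <;> omega

lemma degree_indicatorVec (S : Finset σ) : (indicatorVec S).degree = #S := by
  simp [indicatorVec, map_sum, Finsupp.degree_single]

lemma indicatorVec_le_iff {S T : Finset σ} : indicatorVec S ≤ indicatorVec T ↔ S ⊆ T := by
  refine ⟨fun h e he => ?_, fun h e => ?_⟩
  · by_contra hT
    simpa [indicatorVec_apply, he, hT] using h e
  · simp only [indicatorVec_apply]
    split_ifs with hS hT <;> first | omega | exact absurd (h hS) hT

lemma single_one_le_indicatorVec_iff {S : Finset σ} {e : σ} :
    Finsupp.single e 1 ≤ indicatorVec S ↔ e ∈ S := by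
  rw [Finsupp.single_le_iff, indicatorVec_apply]; split_ifs <;> simp_all

lemma prod_X_eq_monomial_indicatorVec {R : Type*} [CommSemiring R] (S : Finset σ) :
    ∏ e ∈ S, (X e : MvPolynomial σ R) = monomial (indicatorVec S) 1 := by
  rw [indicatorVec, monomial_sum_one]; rfl

lemma eq_of_mod_two_eq_of_degree_le [Fintype σ] {μ μ' : σ →₀ ℕ} (hμ : ∀ e, μ e ≤ 1)
    (hpar : ∀ e, μ e % 2 = μ' e % 2) (hdeg : μ'.degree ≤ μ.degree) : μ' = μ := by
  have hle : ∀ e ∈ (univ : Finset σ), μ e ≤ μ' e := fun e _ => by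
    have := hμ e; have := hpar e; omega
  rw [Finsupp.degree_eq_sum, Finsupp.degree_eq_sum] at hdeg
  have heq := (Finset.sum_eq_sum_iff_of_le hle).mp (le_antisymm (Finset.sum_le_sum hle) hdeg)
  exact Finsupp.ext fun e => (heq e (mem_univ e)).symm

end IndicatorVec

namespace Fin

variable {m : ℕ} [NeZero m]

lemma one_ne_zero_of_nontrivial [Nontrivial (Fin m)] : (1 : Fin m) ≠ 0 := fun h => by
  have := nontrivial_iff_two_le.mp ‹_›
  have := one_eq_zero_iff.mp h
  omega

lemma val_add_one_of_add_one_ne_zero {x : Fin m} (hx : x + 1 ≠ 0) :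
    (x + 1).val = x.val + 1 := by
  have h := Fin.val_sub_one_of_ne_zero hx
  rw [add_sub_cancel_right] at h
  rw [h, Nat.sub_add_cancel (Nat.one_le_iff_ne_zero.mpr (Fin.val_ne_zero_iff.mpr hx))]

lemma odd_val_add_one_iff {x : Fin m} (hx : x + 1 ≠ 0) : Odd (x + 1).val ↔ ¬ Odd x.val := by
  rw [val_add_one_of_add_one_ne_zero hx, Nat.odd_add_one]

lemma not_odd_val_of_add_one_eq_zero (hm : Odd m) {x : Fin m} (hx : x + 1 = 0) :
    ¬ Odd x.val := by
  obtain ⟨k, rfl⟩ := hm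
  rw [eq_neg_of_add_eq_zero_left hx, Fin.coe_neg_one]
  simp

lemma not_odd_val_and_odd_val_add_one (x : Fin m) : ¬ (Odd x.val ∧ Odd (x + 1).val) := by
  rintro ⟨h, h'⟩
  by_cases hx : x + 1 = 0
  · rw [hx, Fin.val_zero] at h'
    exact Nat.not_odd_zero h'
  · exact (odd_val_add_one_iff hx).mp h' h

end Fin

section Matchings

variable {m : ℕ}

def mkEdge (i j : Fin m) (h : i ≠ j) : Edge m := ⟨s(i, j), Sym2.mk_isDiag_iff.not.mpr h⟩

lemma Zv_eq_X {i j : Fin m} (h : i ≠ j) : Zv m i j = X (mkEdge i j h) := by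
  rw [Zv, dif_neg h]; rfl

lemma card_eq_two_mul_card_of_isPM {T : Finset (Fin m)} {M : Finset (Edge m)}
    (h : IsPM m T M) : #T = 2 * #M := by
  have hT : T = M.biUnion fun e => e.val.toFinset := by
    ext v; simp [h.1 v]
  rw [hT, card_biUnion, sum_congr rfl fun e _ => Sym2.card_toFinset_of_not_isDiag _ e.2,
    sum_const, smul_eq_mul, mul_comm]
  intro e he f hf hef
  refine disjoint_left.mpr fun v hv hv' => hef ?_
  exact h.2 e he f hf v (Sym2.mem_toFinset.mp hv) (Sym2.mem_toFinset.mp hv')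

lemma isHomogeneous_matchSum {T : Finset (Fin m)} {k : ℕ} (hT : #T = 2 * k) :
    (matchSum m T).IsHomogeneous k := by
  refine IsHomogeneous.sum _ _ _ fun M hM => ?_
  have hk : ∑ _e ∈ M, 1 = k := by
    have := card_eq_two_mul_card_of_isPM (mem_filter.mp hM).2
    rw [sum_const, smul_eq_mul, mul_one]; omega
  exact hk ▸ IsHomogeneous.prod _ _ _ fun e _ => isHomogeneous_X _ e

lemma isHomogeneous_H0 (hm : Odd m) : (H0 m).IsHomogeneous m := by
  obtain ⟨k, hk⟩ := hm
  have hP : ∀ i, (P m i).IsHomogeneous k := fun i =>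
    isHomogeneous_matchSum <| by
      rw [card_erase_of_mem (mem_univ i), card_univ, Fintype.card_fin]; omega
  refine IsHomogeneous.sum _ _ _ fun p hp => ?_
  have h :=
    ((isHomogeneous_X _ (mkEdge p.1 p.2 (mem_filter.mp hp).2.ne)).mul (hP p.1)).mul (hP p.2)
  rwa [← Zv_eq_X, show 1 + k + k = m by omega] at h

lemma matchSum_eq_sum_monomial (T : Finset (Fin m)) :
    matchSum m T = ∑ M ∈ univ.filter (IsPM m T), monomial (indicatorVec M) 1 :=
  sum_congr rfl fun M _ => prod_X_eq_monomial_indicatorVec M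

lemma coeff_X_mul_matchSum_mul_matchSum (μ : Edge m →₀ ℕ) (e : Edge m) (T₁ T₂ : Finset (Fin m)) :
    coeff μ (X e * matchSum m T₁ * matchSum m T₂) =
      ∑ M₁ ∈ univ.filter (IsPM m T₁), ∑ M₂ ∈ univ.filter (IsPM m T₂),
        if Finsupp.single e 1 + indicatorVec M₁ + indicatorVec M₂ = μ then 1 else 0 := by
  simp only [matchSum_eq_sum_monomial, mul_sum, sum_mul, coeff_sum, X, monomial_mul,
    coeff_monomial, mul_one]
  exact sum_comm

lemma sum_filter_lt_eq_sum_edge {M : Type*} [AddCommMonoid M] (g : Sym2 (Fin m) → M) :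
    ∑ p ∈ univ.filter (fun p : Fin m × Fin m => p.1 < p.2), g s(p.1, p.2) =
      ∑ e : Edge m, g e.val := by
  refine sum_bij' (fun p hp => mkEdge p.1 p.2 (mem_filter.mp hp).2.ne)
    (fun e _ => (e.val.inf, e.val.sup)) (fun _ _ => mem_univ _) ?_ ?_ ?_ (fun _ _ => rfl)
  · rintro ⟨e, he⟩ -
    induction e using Sym2.ind with
    | _ a b => simpa [inf_lt_sup, eq_comm] using he
  · rintro ⟨a, b⟩ hp
    have hab := (mem_filter.mp hp).2
    simp [mkEdge, hab.le]
  · rintro ⟨e, he⟩ -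
    induction e using Sym2.ind with
    | _ a b =>
      apply Subtype.ext
      rcases le_total a b with h | h
      · simp [mkEdge, h]
      · simp [mkEdge, h, Sym2.eq_swap]

end Matchings

section HamiltonianCycle

variable {m : ℕ} [NeZero m] [Nontrivial (Fin m)]

def cycleEdge (u : Fin m) : Edge m :=
  mkEdge u (u + 1) fun h => Fin.one_ne_zero_of_nontrivial (left_eq_add.mp h)

lemma mem_cycleEdge {u v : Fin m} : v ∈ (cycleEdge u).val ↔ v = u ∨ v = u + 1 := Sym2.mem_iff

lemma cycleEdge_injective (hm₃ : 3 ≤ m) : Function.Injective (cycleEdge (m := m)) := by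
  intro u w h
  rcases Sym2.eq_iff.mp (congrArg Subtype.val h) with ⟨h₁, -⟩ | ⟨h₁, h₂⟩
  · exact h₁
  · rw [h₁, add_assoc] at h₂
    have h2 := congrArg Fin.val (add_eq_left.mp h₂)
    simp [Fin.val_add, Nat.mod_eq_of_lt (show 1 < m by omega),
      Nat.mod_eq_of_lt (show 2 < m by omega)] at h2

def cycleEdges : Finset (Edge m) := univ.image cycleEdge

lemma mem_cycleEdges {e : Edge m} : e ∈ cycleEdges ↔ ∃ u, cycleEdge u = e := by
  simp [cycleEdges]

lemma card_cycleEdges (hm₃ : 3 ≤ m) : #(cycleEdges (m := m)) = m := by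
  rw [cycleEdges, card_image_of_injective _ (cycleEdge_injective hm₃), card_univ, Fintype.card_fin]

/-- The perfect matching of the path `C - i`: the edges `{i + t, i + t + 1}` with `t` odd. -/
def altEdges (i : Fin m) : Finset (Edge m) :=
  (univ.filter fun u => Odd (u - i).val).image cycleEdge

lemma cycleEdge_mem_altEdges (hm₃ : 3 ≤ m) {i u : Fin m} :
    cycleEdge u ∈ altEdges i ↔ Odd (u - i).val := by
  rw [altEdges, (cycleEdge_injective hm₃).mem_finset_image, mem_filter]
  simp

lemma altEdges_subset_cycleEdges (i : Fin m) : altEdges i ⊆ cycleEdges :=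
  image_subset_image (subset_univ _)

lemma isPM_altEdges (hm₃ : 3 ≤ m) (hm : Odd m) (i : Fin m) :
    IsPM m (univ.erase i) (altEdges i) := by
  have hadj : ∀ u, Odd (u - i).val → ¬ Odd (u + 1 - i).val := fun u hu hu' =>
    Fin.not_odd_val_and_odd_val_add_one (u - i) ⟨hu, by rwa [sub_add_eq_add_sub]⟩
  refine ⟨fun v => ?_, ?_⟩
  · simp only [mem_erase, mem_univ, and_true]
    constructor
    · intro hv
      by_cases hodd : Odd (v - i).val
      · exact ⟨cycleEdge v, (cycleEdge_mem_altEdges hm₃).mpr hodd, mem_cycleEdge.mpr (.inl rfl)⟩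
      · refine ⟨cycleEdge (v - 1), (cycleEdge_mem_altEdges hm₃).mpr ?_,
          mem_cycleEdge.mpr (.inr (sub_add_cancel v 1).symm)⟩
        have hx : v - 1 - i + 1 = v - i := by abel
        have hne : v - 1 - i + 1 ≠ 0 := by rwa [hx, sub_ne_zero]
        by_contra h
        exact hodd (hx ▸ (Fin.odd_val_add_one_iff hne).mpr h)
    · rintro ⟨e, he, hve⟩ rfl
      obtain ⟨u, hu, rfl⟩ := mem_image.mp he
      have hu := (mem_filter.mp hu).2
      rcases mem_cycleEdge.mp hve with rfl | h
      · simp at hu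
      · exact Fin.not_odd_val_of_add_one_eq_zero hm (by rw [h]; abel) hu
  · intro e he f hf v hve hvf
    obtain ⟨u, hu, rfl⟩ := mem_image.mp he
    obtain ⟨w, hw, rfl⟩ := mem_image.mp hf
    have hu := (mem_filter.mp hu).2
    have hw := (mem_filter.mp hw).2
    rcases mem_cycleEdge.mp hve with rfl | rfl <;> rcases mem_cycleEdge.mp hvf with h | h
    · rw [h]
    · exact absurd (h ▸ hu) (hadj w hw)
    · exact absurd (h ▸ hw) (hadj u hu)
    · rw [add_right_cancel h]

lemma cycleEdge_mem_iff_sub_one_notMem {i u : Fin m} {M : Finset (Edge m)} (hm₃ : 3 ≤ m)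
    (hM : IsPM m (univ.erase i) M) (hC : M ⊆ cycleEdges) (hu : u ≠ i) :
    cycleEdge u ∈ M ↔ cycleEdge (u - 1) ∉ M := by
  have hne : cycleEdge u ≠ cycleEdge (u - 1) := fun h =>
    Fin.one_ne_zero_of_nontrivial (sub_eq_self.mp (cycleEdge_injective hm₃ h).symm)
  constructor
  · exact fun h h' => hne (hM.2 _ h _ h' u (mem_cycleEdge.mpr (.inl rfl))
      (mem_cycleEdge.mpr (.inr (sub_add_cancel u 1).symm)))
  · intro h
    obtain ⟨e, he, hue⟩ := (hM.1 u).mp (by simpa using hu)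
    obtain ⟨w, rfl⟩ := mem_cycleEdges.mp (hC he)
    rcases mem_cycleEdge.mp hue with rfl | hw
    · exact he
    · exact absurd (eq_sub_of_add_eq hw.symm ▸ he) h

lemma eq_altEdges_of_isPM {i : Fin m} {M : Finset (Edge m)} (hm₃ : 3 ≤ m)
    (hM : IsPM m (univ.erase i) M) (hC : M ⊆ cycleEdges) : M = altEdges i := by
  have hoff : ∀ d, ∀ u : Fin m, (u - i).val = d → (cycleEdge u ∈ M ↔ Odd d) := by
    intro d
    induction d with
    | zero =>
      intro u hu
      obtain rfl : u = i := sub_eq_zero.mp (Fin.val_eq_zero_iff.mp hu)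
      simp only [Nat.not_odd_zero, iff_false]
      intro h
      simpa using (hM.1 u).mpr ⟨_, h, mem_cycleEdge.mpr (.inl rfl)⟩
    | succ d ih =>
      intro u hu
      have hui : u ≠ i := fun h => by simp [h] at hu
      have hd : (u - 1 - i).val = d := by
        rw [sub_right_comm, Fin.val_sub_one_of_ne_zero (sub_ne_zero.mpr hui), hu]
        rfl
      rw [cycleEdge_mem_iff_sub_one_notMem hm₃ hM hC hui, ih _ hd, Nat.odd_add_one]
  ext e
  constructor
  · intro he
    obtain ⟨u, rfl⟩ := mem_cycleEdges.mp (hC he)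
    exact (cycleEdge_mem_altEdges hm₃).mpr ((hoff _ u rfl).mp he)
  · intro he
    obtain ⟨u, rfl⟩ := mem_cycleEdges.mp (altEdges_subset_cycleEdges i he)
    exact (hoff _ u rfl).mpr ((cycleEdge_mem_altEdges hm₃).mp he)

lemma single_add_indicatorVec_altEdges (hm₃ : 3 ≤ m) (hm : Odd m) (k : Fin m) :
    Finsupp.single (cycleEdge k) 1 + indicatorVec (altEdges k) +
      indicatorVec (altEdges (k + 1)) = indicatorVec cycleEdges := by
  ext e
  simp only [Finsupp.add_apply, Finsupp.single_apply, indicatorVec_apply]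
  by_cases he : e ∈ cycleEdges
  · obtain ⟨u, rfl⟩ := mem_cycleEdges.mp he
    have hx : u - k = u - (k + 1) + 1 := by abel
    have hku : k = u ↔ u - (k + 1) + 1 = 0 := by rw [← hx, sub_eq_zero, eq_comm]
    simp only [(cycleEdge_injective hm₃).eq_iff, cycleEdge_mem_altEdges hm₃, he, if_true, hx, hku]
    generalize u - (k + 1) = x
    by_cases h0 : x + 1 = 0
    · simp [h0, Fin.not_odd_val_of_add_one_eq_zero hm h0]
    · by_cases hodd : Odd x.val <;> simp [h0, Fin.odd_val_add_one_iff h0, hodd]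
  · have hk : cycleEdge k ≠ e := fun h => he (mem_cycleEdges.mpr ⟨k, h⟩)
    rw [if_neg hk, if_neg fun h => he (altEdges_subset_cycleEdges _ h),
      if_neg fun h => he (altEdges_subset_cycleEdges _ h), if_neg he]

lemma single_add_indicatorVec_eq_indicatorVec_cycleEdges_iff (hm₃ : 3 ≤ m) (hm : Odd m)
    {i j : Fin m} (hij : i ≠ j) {M₁ M₂ : Finset (Edge m)} (h₁ : IsPM m (univ.erase i) M₁)
    (h₂ : IsPM m (univ.erase j) M₂) :
    Finsupp.single (mkEdge i j hij) 1 + indicatorVec M₁ + indicatorVec M₂ =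
        indicatorVec cycleEdges ↔
      mkEdge i j hij ∈ cycleEdges ∧ M₁ = altEdges i ∧ M₂ = altEdges j := by
  constructor
  · intro h
    have hle₀ := h ▸ (le_self_add.trans le_self_add :
      Finsupp.single (mkEdge i j hij) 1 ≤ _ + indicatorVec M₁ + indicatorVec M₂)
    have hle₁ := h ▸ (le_add_self.trans le_self_add :
      indicatorVec M₁ ≤ Finsupp.single (mkEdge i j hij) 1 + _ + indicatorVec M₂)
    have hle₂ := h ▸ (le_add_self :
      indicatorVec M₂ ≤ Finsupp.single (mkEdge i j hij) 1 + indicatorVec M₁ + _)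
    exact ⟨single_one_le_indicatorVec_iff.mp hle₀,
      eq_altEdges_of_isPM hm₃ h₁ (indicatorVec_le_iff.mp hle₁),
      eq_altEdges_of_isPM hm₃ h₂ (indicatorVec_le_iff.mp hle₂)⟩
  · rintro ⟨hC, rfl, rfl⟩
    obtain ⟨k, hk⟩ := mem_cycleEdges.mp hC
    rcases Sym2.eq_iff.mp (congrArg Subtype.val hk) with ⟨rfl, rfl⟩ | ⟨rfl, rfl⟩
    · rw [← hk]
      exact single_add_indicatorVec_altEdges hm₃ hm k
    · rw [← hk, add_right_comm]
      exact single_add_indicatorVec_altEdges hm₃ hm k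

lemma coeff_indicatorVec_cycleEdges_Zv_mul_P_mul_P (hm₃ : 3 ≤ m) (hm : Odd m) {i j : Fin m}
    (hij : i ≠ j) :
    coeff (indicatorVec cycleEdges) (Zv m i j * P m i * P m j) =
      if mkEdge i j hij ∈ cycleEdges then 1 else 0 := by
  rw [Zv_eq_X hij, P, P, coeff_X_mul_matchSum_mul_matchSum]
  have key : ∀ M₁ ∈ univ.filter (IsPM m (univ.erase i)),
      ∀ M₂ ∈ univ.filter (IsPM m (univ.erase j)),
      (Finsupp.single (mkEdge i j hij) 1 + indicatorVec M₁ + indicatorVec M₂ =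
        indicatorVec cycleEdges ↔
          mkEdge i j hij ∈ cycleEdges ∧ M₁ = altEdges i ∧ M₂ = altEdges j) := fun M₁ h₁ M₂ h₂ =>
    single_add_indicatorVec_eq_indicatorVec_cycleEdges_iff hm₃ hm hij (mem_filter.mp h₁).2
      (mem_filter.mp h₂).2
  rw [sum_congr rfl fun M₁ h₁ => sum_congr rfl fun M₂ h₂ => if_congr (key M₁ h₁ M₂ h₂) rfl rfl]
  simp [ite_and, isPM_altEdges hm₃ hm]

lemma coeff_indicatorVec_cycleEdges_H0 (hm₃ : 3 ≤ m) (hm : Odd m) :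
    coeff (indicatorVec cycleEdges) (H0 m) = 1 := by
  let g : Sym2 (Fin m) → ZMod 2 := fun z => if z ∈ cycleEdges.image Subtype.val then 1 else 0
  calc coeff (indicatorVec cycleEdges) (H0 m)
      = ∑ p ∈ univ.filter (fun p : Fin m × Fin m => p.1 < p.2), g s(p.1, p.2) := by
        rw [H0, coeff_sum]
        refine sum_congr rfl fun p hp => ?_
        rw [coeff_indicatorVec_cycleEdges_Zv_mul_P_mul_P hm₃ hm (mem_filter.mp hp).2.ne]
        exact if_congr Subtype.val_injective.mem_finset_image.symm rfl rfl
    _ = ∑ e : Edge m, g e.val := sum_filter_lt_eq_sum_edge g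
    _ = #(cycleEdges (m := m)) := by
        simp only [g, Subtype.val_injective.mem_finset_image, sum_boole, filter_mem_eq_inter,
          univ_inter]
    _ = 1 := by rw [card_cycleEdges hm₃]; exact ZMod.natCast_eq_one_iff_odd.mpr hm

end HamiltonianCycle

theorem H0_two_conducting_general (m : ℕ) (hm : 3 ≤ m) (hmodd : Odd m)
    (a : Edge m → ℕ) :
    ∃ μ ∈ (H0 m).support, (∀ e : Edge m, μ e ≤ a e + 1) ∧
      ∀ μ' ∈ (H0 m).support, (∀ e : Edge m, μ e % 2 = μ' e % 2) → μ' = μ := by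
  have : NeZero m := ⟨by omega⟩
  have : Nontrivial (Fin m) := Fin.nontrivial_iff_two_le.mpr (by omega)
  have hle := indicatorVec_le_one (cycleEdges (m := m))
  refine ⟨indicatorVec cycleEdges, ?_, fun e => (hle e).trans (by omega), fun μ' hμ' hpar => ?_⟩
  · rw [mem_support_iff, coeff_indicatorVec_cycleEdges_H0 hm hmodd]
    exact one_ne_zero
  · refine eq_of_mod_two_eq_of_degree_le hle hpar (le_of_eq ?_)
    rw [degree_indicatorVec, card_cycleEdges hm, Finsupp.degree_eq_weight_one]
    exact isHomogeneous_H0 hmodd (mem_support_iff.mp hμ')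

/-- `H₀` is `2`-conducting. -/
theorem H0_two_conducting (m : ℕ) (hm : 3 ≤ m) (hmodd : Odd m)
    (a : Edge m → ℕ) (ha : m - 3 ≤ ∑ e : Edge m, a e) :
    ∃ μ ∈ (H0 m).support, (∀ e : Edge m, μ e ≤ a e + 1) ∧
      ∀ μ' ∈ (H0 m).support, (∀ e : Edge m, μ e % 2 = μ' e % 2) → μ' = μ :=
  H0_two_conducting_general m hm hmodd a

end
end

section
/- Let m ≥ 3 be an odd integer. In R = 𝔽₂[z_e : e ∈ E]: (1) for every k ∈ {1,…,m}, D_k(P_k) = Σ_{{u,v}⊆{1,…,m}∖{k}} z_{uk}·z_{kv}·(Σ_{M a perfect matching of {1,…,m}∖{u,v,k}} Π_{e∈M} z_e); and (2) for all j ≠ k in {1,…,m}, D_k(P_j) = Σ_{{u,v,w}⊆{1,…,m}∖{j,k}} z_{uk}·z_{vk}·z_{wk}·(Σ_{M a perfect matching of {1,…,m}∖{u,v,w,j,k}} Π_{e∈M} z_e). In other words, D_k(P_k) is the generating polynomial of graphs whose components are a path of length 2 centered at k and a perfect matching of the remaining vertices, and for j ≠ k, D_k(P_j) is the generating polynomial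 of graphs whose components are the isolated vertex j, a 3-edge star centered at k, and a perfect matching of the remaining vertices. -/
/-!
`P_i` is the generating function of the perfect matchings of `[m] ∖ {i}`, and `∂/∂z_e` turns a
matching containing `e` into the matching of the remaining vertices. Hence `D_k` applied to the
matching polynomial of `T` is the sum, over 2-subsets `{u, v} ⊆ T ∖ {k}`, of
`z_{uk} z_{vk}` times the matching polynomial of `T ∖ {u, v}`; for `T = [m] ∖ {k}` this is (1).
For `T = [m] ∖ {j}` the vertex `k` remains to be matched. Since every matching of a vertex set
containing `k` has exactly one edge at `k`, the matching polynomial equals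
`∑_{e ∋ k} z_e ∂/∂z_e` of itself, which expands it along `k`. This produces a sum over 2-subsets
`{u, v}` and a third vertex `x`, in which each 3-subset `{u, v, x}` occurs three times, that is,
once over `𝔽₂`.
-/

open scoped Classical

noncomputable section

open Finset MvPolynomial

theorem Finset.sum_powersetCard_two_eq_sum_sym2 {α β : Type*} [DecidableEq α] [AddCommMonoid β]
    (s : Finset α) (f : Finset α → β) :
    ∑ S ∈ s.powersetCard 2, f S = ∑ z ∈ s.sym2 with ¬z.IsDiag, f z.toFinset := by
  symm
  refine sum_bij (fun z _ => z.toFinset) ?_ ?_ ?_ (fun _ _ => rfl)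
  · intro z hz
    obtain ⟨hzs, hz⟩ := mem_filter.1 hz
    refine mem_powersetCard.2 ⟨fun x hx => ?_, Sym2.card_toFinset_of_not_isDiag z hz⟩
    exact mem_sym2_iff.1 hzs x (Sym2.mem_toFinset.1 hx)
  · intro z _ w _ h
    exact Sym2.ext fun x => by rw [← Sym2.mem_toFinset, h, Sym2.mem_toFinset]
  · intro S hS
    obtain ⟨hSs, hS⟩ := mem_powersetCard.1 hS
    obtain ⟨a, b, hab, rfl⟩ := card_eq_two.1 hS
    refine ⟨s(a, b), mem_filter.2 ⟨mk_mem_sym2_iff.2 ⟨hSs ?_, hSs ?_⟩, ?_⟩, Sym2.toFinset_mk_eq⟩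
    · simp
    · simp
    · simpa using hab

theorem Finset.sum_powersetCard_sum_sdiff_insert {α β : Type*} [DecidableEq α] [AddCommMonoid β]
    (U : Finset α) (n : ℕ) (f : Finset α → β) :
    ∑ S ∈ U.powersetCard n, ∑ x ∈ U \ S, f (insert x S) =
      (n + 1) • ∑ S ∈ U.powersetCard (n + 1), f S := by
  have hconst : ∀ S ∈ U.powersetCard (n + 1), (n + 1) • f S = ∑ _x ∈ S, f S := fun S hS => by
    rw [sum_const, (mem_powersetCard.1 hS).2]
  rw [smul_sum, sum_congr rfl hconst, sum_sigma', sum_sigma']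
  refine sum_nbij' (fun p => ⟨insert p.2 p.1, p.2⟩) (fun p => ⟨p.1.erase p.2, p.2⟩)
    ?_ ?_ ?_ ?_ (fun _ _ => rfl)
  · rintro ⟨S, x⟩ h
    simp only [mem_sigma, mem_powersetCard, mem_sdiff] at h ⊢
    obtain ⟨⟨hSU, hS⟩, hxU, hxS⟩ := h
    exact ⟨⟨insert_subset hxU hSU, by rw [card_insert_of_notMem hxS, hS]⟩, mem_insert_self x S⟩
  · rintro ⟨S, x⟩ h
    simp only [mem_sigma, mem_powersetCard, mem_sdiff] at h ⊢
    obtain ⟨⟨hSU, hS⟩, hxS⟩ := h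
    exact ⟨⟨(erase_subset x S).trans hSU, by rw [card_erase_of_mem hxS, hS]; rfl⟩,
      hSU hxS, notMem_erase x S⟩
  · rintro ⟨S, x⟩ h
    simp only [mem_sigma, mem_sdiff] at h
    simp [erase_insert h.2.2]
  · rintro ⟨S, x⟩ h
    simp only [mem_sigma] at h
    simp [insert_erase h.2]

theorem MvPolynomial.pderiv_prod_X {σ R : Type*} [CommSemiring R] [DecidableEq σ] (i : σ)
    (s : Finset σ) :
    pderiv i (∏ j ∈ s, X j : MvPolynomial σ R) = if i ∈ s then ∏ j ∈ s.erase i, X j else 0 := by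
  induction s using Finset.induction with
  | empty => simp
  | insert a s ha ih =>
    rw [prod_insert ha, pderiv_mul, ih, pderiv_X]
    by_cases hia : i = a
    · subst hia
      simp [ha]
    · have hai : a ≠ i := Ne.symm hia
      by_cases his : i ∈ s
      · have has : a ∉ s.erase i := fun h => ha (mem_of_mem_erase h)
        simp [his, hia, hai, erase_insert_of_ne hai, prod_insert has]
      · simp [his, hia, hai]

namespace IsPM

variable {m : ℕ} {T : Finset (Fin m)} {M : Finset (Edge m)} {e : Edge m}

theorem toFinset_subset (h : IsPM m T M) (he : e ∈ M) : e.val.toFinset ⊆ T :=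
  fun v hv => (h.1 v).2 ⟨e, he, Sym2.mem_toFinset.1 hv⟩

theorem erase_edge (h : IsPM m T M) (he : e ∈ M) :
    IsPM m (T \ e.val.toFinset) (M.erase e) := by
  refine ⟨fun v => ?_, fun f hf g hg => h.2 f (mem_of_mem_erase hf) g (mem_of_mem_erase hg)⟩
  simp only [mem_sdiff, Sym2.mem_toFinset, mem_erase]
  constructor
  · rintro ⟨hvT, hve⟩
    obtain ⟨f, hf, hvf⟩ := (h.1 v).1 hvT
    exact ⟨f, ⟨fun hfe => hve (hfe ▸ hvf), hf⟩, hvf⟩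
  · rintro ⟨f, ⟨hfe, hf⟩, hvf⟩
    exact ⟨(h.1 v).2 ⟨f, hf, hvf⟩, fun hve => hfe (h.2 f hf e he v hvf hve)⟩

theorem insert_edge (h : IsPM m (T \ e.val.toFinset) M) (he : e.val.toFinset ⊆ T) :
    IsPM m T (insert e M) := by
  have hcover : ∀ f ∈ M, ∀ v ∈ f.val, v ∈ T ∧ v ∉ e.val := fun f hf v hv => by
    simpa using (h.1 v).2 ⟨f, hf, hv⟩
  refine ⟨fun v => ⟨fun hvT => ?_, ?_⟩, ?_⟩
  · by_cases hve : v ∈ e.val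
    · exact ⟨e, mem_insert_self e M, hve⟩
    · obtain ⟨f, hf, hvf⟩ := (h.1 v).1 (by simp [hvT, hve])
      exact ⟨f, mem_insert_of_mem hf, hvf⟩
  · rintro ⟨f, hf, hvf⟩
    rcases mem_insert.1 hf with rfl | hf
    · exact he (Sym2.mem_toFinset.2 hvf)
    · exact (hcover f hf v hvf).1
  · intro f hf g hg v hvf hvg
    rcases mem_insert.1 hf with rfl | hf <;> rcases mem_insert.1 hg with hge | hg
    · exact hge.symm
    · exact absurd hvf (hcover g hg v hvg).2
    · exact absurd (hge ▸ hvg) (hcover f hf v hvf).2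
    · exact h.2 f hf g hg v hvf hvg

theorem edge_notMem (h : IsPM m (T \ e.val.toFinset) M) : e ∉ M := fun he => by
  obtain ⟨v, hv⟩ := nonempty_iff_ne_empty.2 e.val.toFinset_ne_empty
  simpa [hv] using h.toFinset_subset he hv

theorem card_filter_mem_eq_one (h : IsPM m T M) {k : Fin m} (hk : k ∈ T) :
    #{e ∈ M | k ∈ e.val} = 1 := by
  obtain ⟨e, he, hke⟩ := (h.1 k).1 hk
  refine card_eq_one.2 ⟨e, ext fun f => ?_⟩
  simp only [mem_filter, mem_singleton]
  exact ⟨fun ⟨hf, hkf⟩ => h.2 f hf e he k hkf hke, fun hfe => hfe ▸ ⟨he, hke⟩⟩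

end IsPM

variable {m : ℕ}

theorem pderiv_matchSum (e : Edge m) (T : Finset (Fin m)) :
    pderiv e (matchSum m T) =
      if e.val.toFinset ⊆ T then matchSum m (T \ e.val.toFinset) else 0 := by
  simp only [matchSum, map_sum, pderiv_prod_X]
  rw [← sum_filter]
  split_ifs with heT
  · refine sum_nbij' (fun M => M.erase e) (fun M => insert e M) ?_ ?_ ?_ ?_ (fun _ _ => rfl)
    · intro M hM
      simp only [mem_filter, mem_univ, true_and] at hM ⊢
      exact hM.1.erase_edge hM.2
    · intro M hM
      simp only [mem_filter, mem_univ, true_and] at hM ⊢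
      exact ⟨hM.insert_edge heT, mem_insert_self e M⟩
    · intro M hM
      simp only [mem_filter, mem_univ, true_and] at hM
      exact insert_erase hM.2
    · intro M hM
      simp only [mem_filter, mem_univ, true_and] at hM
      exact erase_insert hM.edge_notMem
  · refine sum_eq_zero fun M hM => absurd ?_ heT
    simp only [mem_filter, mem_univ, true_and] at hM
    exact hM.1.toFinset_subset hM.2

theorem matchSum_eq_sum_X_mul_pderiv {k : Fin m} {T : Finset (Fin m)} (hk : k ∈ T) :
    matchSum m T = ∑ e ∈ univ.filter (fun e : Edge m => k ∈ e.val),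
      X e * pderiv e (matchSum m T) := by
  simp only [matchSum, map_sum, mul_sum]
  rw [sum_comm]
  refine sum_congr rfl fun M hM => ?_
  have hPM := (mem_filter.1 hM).2
  simp only [pderiv_prod_X, mul_ite, mul_zero, ← sum_filter, filter_filter]
  have hmul : ∀ e ∈ univ.filter (fun e : Edge m => k ∈ e.val ∧ e ∈ M),
      X e * ∏ f ∈ M.erase e, X f = ∏ f ∈ M, (X f : R2 m) := fun e he =>
    mul_prod_erase M _ (mem_filter.1 he).2.2
  have hcard : #(univ.filter fun e : Edge m => k ∈ e.val ∧ e ∈ M) = 1 := by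
    rw [← hPM.card_filter_mem_eq_one hk]
    congr 1
    ext e
    simp [and_comm]
  rw [sum_congr rfl hmul, sum_const, hcard, one_smul]

theorem Zv_of_ne_s9 {u v : Fin m} (h : u ≠ v) :
    Zv m u v = X ⟨s(u, v), Sym2.mk_isDiag_iff.not.2 h⟩ := dif_neg h

theorem matchSum_eq_sum_partner {k : Fin m} {T : Finset (Fin m)} (hk : k ∈ T) :
    matchSum m T = ∑ x ∈ T.erase k, Zv m k x * matchSum m (T \ {k, x}) := by
  rw [matchSum_eq_sum_X_mul_pderiv hk]
  simp only [pderiv_matchSum, mul_ite, mul_zero]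
  rw [← sum_filter, filter_filter]
  symm
  refine sum_bij (fun x hx => ⟨s(k, x), Sym2.mk_isDiag_iff.not.2 (ne_of_mem_erase hx).symm⟩)
    ?_ ?_ ?_ ?_
  · intro x hx
    simpa [Sym2.toFinset_mk_eq, insert_subset_iff, hk] using mem_of_mem_erase hx
  · intro x _ y _ hxy
    exact Sym2.congr_right.1 (congrArg Subtype.val hxy)
  · intro e he
    obtain ⟨hke, heT⟩ := (mem_filter.1 he).2
    have hx : s(k, Sym2.Mem.other hke) = e.val := Sym2.other_spec hke
    refine ⟨Sym2.Mem.other hke, mem_erase.2 ⟨Sym2.other_ne e.2 hke, ?_⟩, Subtype.ext hx⟩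
    exact heT (Sym2.mem_toFinset.2 (Sym2.other_mem hke))
  · intro x hx
    rw [Zv_of_ne_s9 (ne_of_mem_erase hx).symm, Sym2.toFinset_mk_eq]

theorem D_eq_sum (k : Fin m) (f : R2 m) :
    D m k f = ∑ e ∈ univ.filter (fun e : Edge m => k ∉ e.val),
      (∏ u ∈ e.val.toFinset, Zv m u k) * pderiv e f := by
  refine sum_congr rfl fun ⟨z, hz⟩ _ => ?_
  congr 1
  induction z using Sym2.ind with
  | _ a b =>
    rw [Sym2.lift_mk, Sym2.toFinset_mk_eq, prod_pair (Sym2.mk_isDiag_iff.not.1 hz)]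
    change Zv m a k * Zv m k b = _
    rw [Zv_symm m k b]

theorem D_matchSum (k : Fin m) (T : Finset (Fin m)) :
    D m k (matchSum m T) =
      ∑ S ∈ (T.erase k).powersetCard 2, (∏ u ∈ S, Zv m u k) * matchSum m (T \ S) := by
  let G : Finset (Fin m) → R2 m := fun S =>
    if S ⊆ T.erase k then (∏ u ∈ S, Zv m u k) * matchSum m (T \ S) else 0
  calc D m k (matchSum m T) = ∑ e : Edge m, G e.val.toFinset := by
        rw [D_eq_sum, sum_filter]
        refine sum_congr rfl fun e _ => ?_
        simp only [G, pderiv_matchSum, subset_erase, Sym2.mem_toFinset, mul_ite, mul_zero]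
        by_cases hke : k ∈ e.val <;> by_cases heT : e.val.toFinset ⊆ T <;> simp [hke, heT]
    _ = ∑ z ∈ univ.sym2 with ¬z.IsDiag, G z.toFinset := by
        refine (sum_subtype _ (fun z => ?_) (fun z : Sym2 (Fin m) => G z.toFinset)).symm
        simp
    _ = ∑ S ∈ univ.powersetCard 2, G S := (sum_powersetCard_two_eq_sum_sym2 _ _).symm
    _ = _ := by
        rw [← sum_filter]
        congr 1
        ext S
        simp only [mem_filter, mem_powersetCard, subset_univ, true_and]
        exact and_comm

theorem D_P_self (k : Fin m) :
    D m k (P m k) =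
      ∑ p ∈ univ.filter (fun p : Fin m × Fin m => p.1 < p.2 ∧ p.1 ≠ k ∧ p.2 ≠ k),
        Zv m p.1 k * Zv m k p.2 * matchSum m (univ \ {p.1, p.2, k}) := by
  rw [P, D_matchSum, erase_idem, sum_powersetCard_two_eq_sum_sym2, sum_sym2_filter_not_isDiag]
  refine sum_congr ?_ fun p hp => ?_
  · ext p
    simp only [mem_filter, mem_offDiag, mem_erase, mem_univ, and_true, true_and]
    constructor
    · rintro ⟨⟨h1, h2, -⟩, hlt⟩
      exact ⟨hlt, h1, h2⟩
    · rintro ⟨hlt, h1, h2⟩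
      exact ⟨⟨h1, h2, hlt.ne⟩, hlt⟩
  · have hlt : p.1 < p.2 := (mem_filter.1 hp).2.1
    rw [Sym2.toFinset_mk_eq, prod_pair hlt.ne, Zv_symm m p.2 k]
    congr 2
    ext v
    simp only [mem_sdiff, mem_erase, mem_univ, mem_insert, mem_singleton]
    tauto

theorem D_P_of_ne {j k : Fin m} (hjk : j ≠ k) :
    D m k (P m j) =
      ∑ S ∈ powersetCard 3 (univ \ {j, k}),
        (∏ u ∈ S, Zv m u k) * matchSum m (univ \ (S ∪ {j, k})) := by
  set U : Finset (Fin m) := univ \ {j, k}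
  have hU : (univ.erase j).erase k = U := by
    ext v
    simp [U, and_comm]
  have hexpand : ∀ S ∈ U.powersetCard 2,
      (∏ u ∈ S, Zv m u k) * matchSum m (univ.erase j \ S) =
        ∑ x ∈ U \ S, (∏ u ∈ insert x S, Zv m u k) * matchSum m (univ \ (insert x S ∪ {j, k})) := by
    intro S hS
    have hSU := (mem_powersetCard.1 hS).1
    have hkS : k ∈ univ.erase j \ S :=
      mem_sdiff.2 ⟨mem_erase.2 ⟨hjk.symm, mem_univ k⟩, fun hk => by simpa [U] using hSU hk⟩
    rw [matchSum_eq_sum_partner hkS, mul_sum]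
    refine sum_congr ?_ fun x hx => ?_
    · ext v
      simp only [U, mem_sdiff, mem_erase, mem_univ, mem_insert, mem_singleton]
      tauto
    · rw [prod_insert (mem_sdiff.1 hx).2, Zv_symm m k x, ← mul_assoc, mul_comm (Zv m x k)]
      congr 2
      ext v
      simp only [mem_sdiff, mem_erase, mem_univ, mem_insert, mem_singleton, mem_union]
      tauto
  rw [P, D_matchSum, hU, sum_congr rfl hexpand, sum_powersetCard_sum_sdiff_insert U 2
    fun S => (∏ u ∈ S, Zv m u k) * matchSum m (univ \ (S ∪ {j, k})), succ_nsmul,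
    two_nsmul, CharTwo.add_self_eq_zero, zero_add]

theorem D_of_P_general (m : ℕ) (k : Fin m) :
    (D m k (P m k) =
      ∑ p ∈ Finset.univ.filter
          (fun p : Fin m × Fin m => p.1 < p.2 ∧ p.1 ≠ k ∧ p.2 ≠ k),
        Zv m p.1 k * Zv m k p.2 * matchSum m (Finset.univ \ {p.1, p.2, k})) ∧
    ∀ j : Fin m, j ≠ k →
      D m k (P m j) =
        ∑ S ∈ Finset.powersetCard 3 (Finset.univ \ {j, k}),
          (∏ u ∈ S, Zv m u k) * matchSum m (Finset.univ \ (S ∪ {j, k})) :=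
  ⟨D_P_self k, fun _ hjk => D_P_of_ne hjk⟩

/-- Combinatorial descriptions of `D_k(P_k)` and of `D_k(P_j)` for `j ≠ k`. -/
theorem D_of_P (m : ℕ) (hm : 3 ≤ m) (hmodd : Odd m) (k : Fin m) :
    (D m k (P m k) =
      ∑ p ∈ Finset.univ.filter
          (fun p : Fin m × Fin m => p.1 < p.2 ∧ p.1 ≠ k ∧ p.2 ≠ k),
        Zv m p.1 k * Zv m k p.2 * matchSum m (Finset.univ \ {p.1, p.2, k})) ∧
    ∀ j : Fin m, j ≠ k →
      D m k (P m j) =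
        ∑ S ∈ Finset.powersetCard 3 (Finset.univ \ {j, k}),
          (∏ u ∈ S, Zv m u k) * matchSum m (Finset.univ \ (S ∪ {j, k})) :=
  D_of_P_general m k

end
end

section
/- The six-element set {U_{(a,b,c)} : (a,b,c) ∈ P₃} of polynomials in R is stable under the action of S₅, S₅ acts transitively on it (it consists of a single S₅-orbit), and for each (a,b,c) ∈ P₃ the stabilizer subgroup in S₅ of the element U_{(a,b,c)} is exactly the order-20 subgroup Ψ(a,b,c). -/
open scoped Classical

noncomputable section

/-- Index type for the variables `z_{i,j}`, `1 ≤ i < j ≤ 5` (here `0`-indexed). -/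
abbrev Idx5 := {p : Fin 5 × Fin 5 // p.1 < p.2}

variable (K : Type) [Field K] [CharP K 3]

/-- The polynomial ring `𝕜[z_{i,j} : 1 ≤ i < j ≤ 5]`. -/
abbrev R5 := MvPolynomial Idx5 K

/-- `z_{i,j}`, with the conventions `z_{j,i} = -z_{i,j}` and `z_{i,i} = 0`. -/
def Z5 (i j : Fin 5) : R5 K :=
  if h : i < j then MvPolynomial.X ⟨(i, j), h⟩
  else if h' : j < i then - MvPolynomial.X ⟨(j, i), h'⟩
  else 0

/-- The action of `σ ∈ S₅` on `R5` by `σ · z_{i,j} = z_{σ(i),σ(j)}`. -/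
def act5 (σ : Equiv.Perm (Fin 5)) : R5 K →ₐ[K] R5 K :=
  MvPolynomial.aeval fun p : Idx5 => Z5 K (σ p.val.1) (σ p.val.2)

/-- The `4 × 4` Pfaffians of the skew-symmetric matrix `(z_{i,j})`:
if `{1,…,5} ∖ {i} = {a<b<c<d}` then `P_i = z_{a,b}z_{c,d} − z_{a,c}z_{b,d} + z_{a,d}z_{b,c}`. -/
def P5 (i : Fin 5) : R5 K :=
  if i = 0 then Z5 K 1 2 * Z5 K 3 4 - Z5 K 1 3 * Z5 K 2 4 + Z5 K 1 4 * Z5 K 2 3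
  else if i = 1 then Z5 K 0 2 * Z5 K 3 4 - Z5 K 0 3 * Z5 K 2 4 + Z5 K 0 4 * Z5 K 2 3
  else if i = 2 then Z5 K 0 1 * Z5 K 3 4 - Z5 K 0 3 * Z5 K 1 4 + Z5 K 0 4 * Z5 K 1 3
  else if i = 3 then Z5 K 0 1 * Z5 K 2 4 - Z5 K 0 2 * Z5 K 1 4 + Z5 K 0 4 * Z5 K 1 2
  else Z5 K 0 1 * Z5 K 2 3 - Z5 K 0 2 * Z5 K 1 3 + Z5 K 0 3 * Z5 K 1 2

/-- `Q(η)`: the sum of the elements of the `S₅`-orbit of `η`. -/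
def Qsum (η : R5 K) : R5 K :=
  ∑ u ∈ Finset.image (fun σ : Equiv.Perm (Fin 5) => act5 K σ η) Finset.univ, u

/-- The five monomials `η₁, …, η₅` (with variables `0`-indexed). -/
def eta : Fin 5 → R5 K
  | 0 => Z5 K 0 2 * Z5 K 0 3 * Z5 K 0 4 ^ 2 * Z5 K 1 2 * Z5 K 1 3 ^ 2 * Z5 K 1 4 *
      Z5 K 2 3 * Z5 K 2 4
  | 1 => Z5 K 0 2 * Z5 K 0 3 * Z5 K 0 4 ^ 2 * Z5 K 1 2 * Z5 K 1 3 * Z5 K 1 4 ^ 2 *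
      Z5 K 2 3 ^ 2
  | 2 => Z5 K 0 3 ^ 2 * Z5 K 0 4 ^ 2 * Z5 K 1 2 ^ 2 * Z5 K 1 4 ^ 2 * Z5 K 2 3 ^ 2
  | 3 => Z5 K 0 3 * Z5 K 0 4 ^ 3 * Z5 K 1 2 ^ 2 * Z5 K 1 3 * Z5 K 1 4 * Z5 K 2 3 ^ 2
  | 4 => Z5 K 0 4 ^ 4 * Z5 K 1 2 ^ 2 * Z5 K 1 3 ^ 2 * Z5 K 2 3 ^ 2

/-- `(a,b,c)` is a permutation of `(3,4,5)` (here `0`-indexed: of `(2,3,4)`). -/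
def IsP3 (a b c : Fin 5) : Prop := ({a, b, c} : Finset (Fin 5)) = {2, 3, 4}

/-- The monomial `θ_{(a,b,c)} = z_{2,a}³ z_{b,c}³ Π_{i=2}^5 z_{1,i}` (`0`-indexed). -/
def theta (a b c : Fin 5) : R5 K :=
  Z5 K 1 a ^ 3 * Z5 K b c ^ 3 * (Z5 K 0 1 * Z5 K 0 2 * Z5 K 0 3 * Z5 K 0 4)

/-- The order 20 subgroup `Ψ(a,b,c) = ⟨(1,2,a,b,c), (2,a,c,b)⟩` of `S₅` (`0`-indexed). -/
def Psi (a b c : Fin 5) : Subgroup (Equiv.Perm (Fin 5)) :=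
  Subgroup.closure {List.formPerm [0, 1, a, b, c], List.formPerm [1, a, c, b]}

/-- `U_{(a,b,c)}`: the sum of the elements of the `Ψ(a,b,c)`-orbit of `θ_{(a,b,c)}`. -/
def U (a b c : Fin 5) : R5 K :=
  ∑ u ∈ Finset.image (fun σ : Psi a b c => act5 K σ.val (theta K a b c)) Finset.univ, u


/-- The six-element set `{U_{(a,b,c)} : (a,b,c) ∈ P₃}`. -/
def USet (K : Type) [Field K] [CharP K 3] : Set (R5 K) :=
  {u | ∃ a b c : Fin 5, IsP3 a b c ∧ u = U K a b c}

/-!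
`Ψ(a,b,c)` fixes `U_{(a,b,c)}` because `U` is a `Ψ`-orbit sum. A permutation fixing `1` and `2`
carries `θ`, `Ψ` and hence `U` of one triple to those of another, so the six `U`'s lie in a single
`S₅`-orbit. They are pairwise distinct: up to a common factor, a translate `ρ · U` is the sum of
`θ` over the coset `ρΨ`, and evaluating these coset sums at two points with coordinates in `𝔽₃`
separates the six cosets. Since `|S₅| = 120 = 20 · 6`, orbit–stabilizer then forces the orbit to be
exactly these six polynomials and the stabilizer to be exactly `Ψ`.
-/

open Equiv Finset MulAction

section OrbitSum

variable {G M : Type*} [Group G] [AddCommMonoid M] [DecidableEq M] {H : Subgroup G} [Fintype H]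

def orbitSum [MulAction G M] (H : Subgroup G) [Fintype H] (x : M) : M :=
  ∑ y ∈ univ.image fun h : H => (h : G) • x, y

theorem sum_smul_eq_card_stabilizer_nsmul_orbitSum [MulAction G M] (x : M) :
    ∑ h : H, (h : G) • x = Nat.card (stabilizer H x) • orbitSum H x := by
  rw [orbitSum, sum_comp (fun y => y) (fun h : H => (h : G) • x), smul_sum]
  refine sum_congr rfl fun y hy => ?_
  obtain ⟨h₀, -, rfl⟩ := mem_image.1 hy
  congr 1
  rw [Nat.card_eq_fintype_card, Fintype.card_subtype]
  refine card_bij' (fun h _ => h₀⁻¹ * h) (fun h _ => h₀ * h) ?_ ?_ (by simp) (by simp)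
  · intro h hh
    simp only [mem_filter, mem_univ, true_and, mem_stabilizer_iff, Subgroup.smul_def] at hh ⊢
    rw [Subgroup.coe_mul, mul_smul, hh, Subgroup.coe_inv, inv_smul_smul]
  · intro h hh
    simp only [mem_filter, mem_univ, true_and, mem_stabilizer_iff, Subgroup.smul_def] at hh ⊢
    rw [Subgroup.coe_mul, mul_smul, hh]

theorem smul_orbitSum_of_mem [DistribMulAction G M] (x : M) {g : G} (hg : g ∈ H) :
    g • orbitSum H x = orbitSum H x := by
  have himage : (univ.image fun h : H => (h : G) • x).image (g • ·) =
      univ.image fun h : H => (h : G) • x := by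
    ext y
    simp only [mem_image, mem_univ, true_and, Subtype.exists, exists_prop,
      exists_exists_and_eq_and, smul_smul]
    exact ⟨fun ⟨h, hh, hy⟩ => ⟨g * h, H.mul_mem hg hh, hy⟩,
      fun ⟨h, hh, hy⟩ => ⟨g⁻¹ * h, H.mul_mem (H.inv_mem hg) hh, by rwa [mul_inv_cancel_left]⟩⟩
  rw [orbitSum, smul_sum]
  conv_rhs => rw [← himage]
  rw [sum_image fun _ _ _ _ => (MulAction.injective g ·)]

theorem smul_orbitSum_eq_of_map_conj [DistribMulAction G M] (g : G) (x : M) {H' : Subgroup G}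
    [Fintype H'] (hH' : H.map (MulAut.conj g).toMonoidHom = H') :
    g • orbitSum H x = orbitSum H' (g • x) := by
  have himage : (univ.image fun h : H => (h : G) • x).image (g • ·) =
      univ.image fun h : H' => (h : G) • g • x := by
    ext y
    simp only [mem_image, mem_univ, true_and, Subtype.exists, ← hH', Subgroup.mem_map,
      MulEquiv.coe_toMonoidHom, MulAut.conj_apply, exists_prop, exists_exists_and_eq_and,
      smul_smul, inv_mul_cancel_right]
  rw [orbitSum, orbitSum, smul_sum, ← himage, sum_image fun _ _ _ _ => (MulAction.injective g ·)]

end OrbitSum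

theorem stabilizer_eq_and_orbit_eq_of_card_le {G α : Type*} [Group G] [Finite G]
    [MulAction G α] {x : α} {H : Subgroup G} {s : Set α} (hH : H ≤ stabilizer G x)
    (hs : s ⊆ orbit G x) (hcard : Nat.card G ≤ Nat.card H * s.ncard) :
    stabilizer G x = H ∧ orbit G x = s := by
  have hmul := (stabilizer G x).card_mul_index
  rw [index_stabilizer] at hmul
  have hH_le : Nat.card H ≤ Nat.card (stabilizer G x) := Subgroup.card_le_of_le hH
  have hs_le : s.ncard ≤ (orbit G x).ncard := Set.ncard_le_ncard hs (Set.finite_range _)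
  have hH_pos : 0 < Nat.card H := Nat.card_pos
  have ho_pos : 0 < (orbit G x).ncard :=
    (Set.ncard_pos (Set.finite_range _)).2 ⟨x, mem_orbit_self x⟩
  have hstab : Nat.card (stabilizer G x) ≤ Nat.card H := by nlinarith
  have horb : (orbit G x).ncard ≤ s.ncard := by nlinarith
  exact ⟨(Subgroup.eq_of_le_of_card_ge hH hstab).symm,
    (Set.eq_of_subset_of_ncard_le hs horb (Set.finite_range _)).symm⟩

theorem List.formPerm_map_eq_conj {α : Type*} [DecidableEq α] (e : Equiv.Perm α) :
    ∀ l : List α, (l.map e).formPerm = e * l.formPerm * e⁻¹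
  | [] => by simp
  | [_] => by simp
  | x :: y :: l => by
    rw [List.map_cons, List.map_cons, formPerm_cons_cons, ← List.map_cons,
      formPerm_map_eq_conj e (y :: l), formPerm_cons_cons, Equiv.swap_apply_apply]
    group

section Skew

variable {S T : Type*} [Ring S] [Ring T]

def skewOf (v : Idx5 → S) (i j : Fin 5) : S :=
  if h : i < j then v ⟨(i, j), h⟩ else if h' : j < i then -v ⟨(j, i), h'⟩ else 0

theorem skewOf_self (v : Idx5 → S) (i : Fin 5) : skewOf v i i = 0 := by
  simp [skewOf]

theorem skewOf_swap (v : Idx5 → S) (i j : Fin 5) : skewOf v j i = -skewOf v i j := by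
  rcases lt_trichotomy i j with h | rfl | h
  · simp [skewOf, h, h.not_gt]
  · simp [skewOf_self]
  · simp [skewOf, h, h.not_gt]

theorem skewOf_of_lt (v : Idx5 → S) (p : Idx5) : skewOf v p.1.1 p.1.2 = v p := by
  simp [skewOf, p.2]

theorem map_skewOf (φ : S →+* T) (v : Idx5 → S) (i j : Fin 5) :
    φ (skewOf v i j) = skewOf (φ ∘ v) i j := by
  unfold skewOf
  split_ifs <;> simp

end Skew

section Action

variable (K : Type) [Field K]

theorem Z5_eq_skewOf (i j : Fin 5) : Z5 K i j = skewOf MvPolynomial.X i j := rfl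

theorem act5_Z5 (σ : Perm (Fin 5)) (i j : Fin 5) : act5 K σ (Z5 K i j) = Z5 K (σ i) (σ j) := by
  rw [Z5_eq_skewOf, ← AlgHom.coe_toRingHom, map_skewOf]
  rcases lt_trichotomy i j with h | rfl | h
  · simp [skewOf, h, act5]
  · simp [skewOf_self, Z5_eq_skewOf]
  · rw [skewOf_swap, show Z5 K (σ i) (σ j) = -Z5 K (σ j) (σ i) from skewOf_swap _ _ _]
    simp [skewOf, h, act5]

theorem act5_one : act5 K 1 = AlgHom.id K (R5 K) :=
  MvPolynomial.algHom_ext fun p => by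
    simp [act5, Z5_eq_skewOf, skewOf_of_lt]

theorem act5_mul (σ τ : Perm (Fin 5)) : act5 K (σ * τ) = (act5 K σ).comp (act5 K τ) :=
  MvPolynomial.algHom_ext fun p => by
    rw [AlgHom.comp_apply, ← skewOf_of_lt MvPolynomial.X p, ← Z5_eq_skewOf, act5_Z5, act5_Z5,
      act5_Z5]
    rfl

instance : MulSemiringAction (Perm (Fin 5)) (R5 K) where
  smul σ := act5 K σ
  one_smul P := by simp [HSMul.hSMul, act5_one]
  mul_smul σ τ P := by simp [HSMul.hSMul, act5_mul]
  smul_zero σ := map_zero (act5 K σ)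
  smul_add σ := map_add (act5 K σ)
  smul_one σ := map_one (act5 K σ)
  smul_mul σ := map_mul (act5 K σ)

theorem perm_smul_def (σ : Perm (Fin 5)) (P : R5 K) : σ • P = act5 K σ P := rfl

theorem perm_smul_Z5 (σ : Perm (Fin 5)) (i j : Fin 5) : σ • Z5 K i j = Z5 K (σ i) (σ j) :=
  act5_Z5 K σ i j

end Action

theorem Psi_map_conj (ρ : Perm (Fin 5)) (h0 : ρ 0 = 0) (h1 : ρ 1 = 1) (a b c : Fin 5) :
    (Psi a b c).map (MulAut.conj ρ).toMonoidHom = Psi (ρ a) (ρ b) (ρ c) := by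
  rw [Psi, Psi, MonoidHom.map_closure, Set.image_insert_eq, Set.image_singleton]
  simp only [MulEquiv.coe_toMonoidHom, MulAut.conj_apply, ← List.formPerm_map_eq_conj,
    List.map_cons, List.map_nil, h0, h1]

section Transport

variable (K : Type) [Field K]

theorem U_eq_orbitSum (a b c : Fin 5) : U K a b c = orbitSum (Psi a b c) (theta K a b c) := rfl

theorem prod_Z5_zero_comp_perm (ρ : Perm (Fin 5)) (h0 : ρ 0 = 0) :
    Z5 K 0 (ρ 1) * Z5 K 0 (ρ 2) * Z5 K 0 (ρ 3) * Z5 K 0 (ρ 4) =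
      Z5 K 0 1 * Z5 K 0 2 * Z5 K 0 3 * Z5 K 0 4 := by
  have h := ρ.prod_comp (univ.erase 0) (Z5 K 0) fun i hi =>
    mem_erase.2 ⟨fun hi0 => hi (hi0 ▸ h0), mem_univ i⟩
  rw [show (univ.erase 0 : Finset (Fin 5)) = {1, 2, 3, 4} from by decide] at h
  simpa [mul_assoc] using h

theorem perm_smul_theta (ρ : Perm (Fin 5)) (h0 : ρ 0 = 0) (h1 : ρ 1 = 1) (a b c : Fin 5) :
    ρ • theta K a b c = theta K (ρ a) (ρ b) (ρ c) := by
  simp only [theta, smul_mul', smul_pow', perm_smul_Z5, h0]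
  rw [prod_Z5_zero_comp_perm K ρ h0, h1]

theorem perm_smul_U (ρ : Perm (Fin 5)) (h0 : ρ 0 = 0) (h1 : ρ 1 = 1) (a b c : Fin 5) :
    ρ • U K a b c = U K (ρ a) (ρ b) (ρ c) := by
  rw [U_eq_orbitSum, smul_orbitSum_eq_of_map_conj ρ _ (Psi_map_conj ρ h0 h1 a b c),
    perm_smul_theta K ρ h0 h1, U_eq_orbitSum]

end Transport

section Psi234

/-- `Ψ(3,4,5)` is the Frobenius group `⟨c⟩ ⋊ ⟨d⟩` of its two generating cycles, so it consists
of the `c^i d^j`. -/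
def psiElems : Finset (Perm (Fin 5)) :=
  univ.image fun p : Fin 5 × Fin 4 =>
    List.formPerm [0, 1, 2, 3, 4] ^ (p.1 : ℕ) * List.formPerm [1, 2, 4, 3] ^ (p.2 : ℕ)

theorem psiElems_mul_mem : ∀ σ ∈ psiElems, ∀ τ ∈ psiElems, σ * τ ∈ psiElems := by
  decide +kernel

theorem psiElems_inv_mem : ∀ σ ∈ psiElems, σ⁻¹ ∈ psiElems := by decide +kernel

theorem card_psiElems : psiElems.card = 20 := by decide +kernel

theorem mem_Psi_234_iff (σ : Perm (Fin 5)) : σ ∈ Psi 2 3 4 ↔ σ ∈ psiElems := by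
  constructor
  · intro hσ
    induction hσ using Subgroup.closure_induction with
    | mem τ hτ =>
      rcases hτ with rfl | rfl
      · exact mem_image.2 ⟨(1, 0), mem_univ _, by decide⟩
      · exact mem_image.2 ⟨(0, 1), mem_univ _, by decide⟩
    | one => exact mem_image.2 ⟨(0, 0), mem_univ _, by decide⟩
    | mul τ υ _ _ hτ hυ => exact psiElems_mul_mem τ hτ υ hυ
    | inv τ _ hτ => exact psiElems_inv_mem τ hτ
  · intro hσ
    obtain ⟨p, -, rfl⟩ := mem_image.1 hσ
    exact mul_mem (pow_mem (Subgroup.subset_closure (by simp)) _)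
      (pow_mem (Subgroup.subset_closure (by simp)) _)

theorem card_Psi_234 : Nat.card (Psi 2 3 4) = 20 := by
  rw [← card_psiElems, ← Nat.card_eq_finsetCard]
  exact Nat.card_congr (Equiv.subtypeEquivRight mem_Psi_234_iff)

theorem sum_Psi_234 {M : Type*} [AddCommMonoid M] (f : Perm (Fin 5) → M) :
    ∑ σ : Psi 2 3 4, f σ = ∑ σ ∈ psiElems, f σ :=
  (sum_subtype psiElems (fun σ => (mem_Psi_234_iff σ).symm) f).symm

end Psi234

def p3Perm : Fin 6 → Perm (Fin 5) :=
  ![1, swap 3 4, swap 2 3, List.formPerm [2, 3, 4], List.formPerm [2, 4, 3], swap 2 4]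

theorem p3Perm_fix : ∀ j, p3Perm j 0 = 0 ∧ p3Perm j 1 = 1 := by decide

theorem isP3_p3Perm : ∀ j, IsP3 (p3Perm j 2) (p3Perm j 3) (p3Perm j 4) := by
  unfold IsP3; decide

theorem exists_p3Perm_of_isP3 :
    ∀ a b c, IsP3 a b c → ∃ j, p3Perm j 2 = a ∧ p3Perm j 3 = b ∧ p3Perm j 4 = c := by
  unfold IsP3; decide

section Evaluation

variable (K : Type) [Field K]

theorem eval_Z5 {S : Type*} [CommRing S] (φ : S →+* K) (v : Idx5 → S) (i j : Fin 5) :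
    MvPolynomial.eval (φ ∘ v) (Z5 K i j) = φ (skewOf v i j) := by
  rw [Z5_eq_skewOf, map_skewOf, map_skewOf]
  congr 1
  ext p
  simp

def thetaVal (v : Idx5 → ZMod 3) (σ : Perm (Fin 5)) : ZMod 3 :=
  skewOf v (σ 1) (σ 2) ^ 3 * skewOf v (σ 3) (σ 4) ^ 3 *
    (skewOf v (σ 0) (σ 1) * skewOf v (σ 0) (σ 2) * skewOf v (σ 0) (σ 3) *
      skewOf v (σ 0) (σ 4))

def cosetVal (v : Idx5 → ZMod 3) (ρ : Perm (Fin 5)) : ZMod 3 :=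
  ∑ σ ∈ psiElems, thetaVal v (ρ * σ)

theorem eval_perm_smul_theta (φ : ZMod 3 →+* K) (v : Idx5 → ZMod 3) (σ : Perm (Fin 5)) :
    MvPolynomial.eval (φ ∘ v) (σ • theta K 2 3 4) = φ (thetaVal v σ) := by
  simp only [theta, smul_mul', smul_pow', perm_smul_Z5, map_mul, map_pow, eval_Z5, thetaVal]

theorem eval_perm_smul_sum_Psi_234 (φ : ZMod 3 →+* K) (v : Idx5 → ZMod 3)
    (ρ : Perm (Fin 5)) :
    MvPolynomial.eval (φ ∘ v) (ρ • ∑ σ : Psi 2 3 4, (σ : Perm (Fin 5)) • theta K 2 3 4) =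
      φ (cosetVal v ρ) := by
  rw [smul_sum, sum_Psi_234 fun σ => ρ • σ • theta K 2 3 4, map_sum, cosetVal, map_sum]
  simp only [smul_smul, eval_perm_smul_theta]

def indicatorPoint (s : Finset (Fin 5 × Fin 5)) : Idx5 → ZMod 3 :=
  fun p => if p.1 ∈ s then 1 else 0

-- The two points were found by a computer search; no single point of `𝔽₃` can separate six cosets.
theorem cosetVal_p3Perm_injective : ∀ j k : Fin 6,
    cosetVal (indicatorPoint {(0, 3), (0, 4), (1, 2), (1, 4), (2, 4), (3, 4)}) (p3Perm j) =
      cosetVal (indicatorPoint {(0, 3), (0, 4), (1, 2), (1, 4), (2, 4), (3, 4)}) (p3Perm k) →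
    cosetVal (indicatorPoint {(0, 3), (0, 4), (1, 2), (1, 3), (2, 3), (3, 4)}) (p3Perm j) =
      cosetVal (indicatorPoint {(0, 3), (0, 4), (1, 2), (1, 3), (2, 3), (3, 4)}) (p3Perm k) →
    j = k := by
  decide +kernel

theorem perm_smul_U_234_injective [CharP K 3] :
    Function.Injective fun j : Fin 6 => p3Perm j • U K 2 3 4 := by
  intro j k hjk
  have hval : ∀ v, cosetVal v (p3Perm j) = cosetVal v (p3Perm k) := by
    intro v
    apply (ZMod.castHom (dvd_refl 3) K).injective
    rw [← eval_perm_smul_sum_Psi_234, ← eval_perm_smul_sum_Psi_234,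
      sum_smul_eq_card_stabilizer_nsmul_orbitSum, ← U_eq_orbitSum, smul_comm (p3Perm j),
      smul_comm (p3Perm k), show p3Perm j • U K 2 3 4 = p3Perm k • U K 2 3 4 from hjk]
  exact cosetVal_p3Perm_injective j k (hval _) (hval _)

end Evaluation

section Orbit

variable (K : Type) [Field K] [CharP K 3]

theorem USet_eq_range : USet K = Set.range fun j : Fin 6 => p3Perm j • U K 2 3 4 := by
  ext u
  constructor
  · rintro ⟨a, b, c, habc, rfl⟩
    obtain ⟨j, rfl, rfl, rfl⟩ := exists_p3Perm_of_isP3 a b c habc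
    exact ⟨j, perm_smul_U K _ (p3Perm_fix j).1 (p3Perm_fix j).2 2 3 4⟩
  · rintro ⟨j, rfl⟩
    exact ⟨_, _, _, isP3_p3Perm j, perm_smul_U K _ (p3Perm_fix j).1 (p3Perm_fix j).2 2 3 4⟩

theorem stabilizer_U_234_and_orbit_U_234 :
    stabilizer (Perm (Fin 5)) (U K 2 3 4) = Psi 2 3 4 ∧
      orbit (Perm (Fin 5)) (U K 2 3 4) = USet K := by
  rw [USet_eq_range]
  refine stabilizer_eq_and_orbit_eq_of_card_le (fun σ hσ => smul_orbitSum_of_mem _ hσ)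
    (Set.range_subset_iff.2 fun j => mem_orbit _ _) ?_
  rw [Set.ncard_range_of_injective (perm_smul_U_234_injective K), card_Psi_234, Nat.card_perm,
    Nat.card_fin, Nat.card_fin]
  decide

theorem stabilizer_U {a b c : Fin 5} (habc : IsP3 a b c) :
    stabilizer (Perm (Fin 5)) (U K a b c) = Psi a b c := by
  obtain ⟨j, rfl, rfl, rfl⟩ := exists_p3Perm_of_isP3 a b c habc
  obtain ⟨h0, h1⟩ := p3Perm_fix j
  rw [← perm_smul_U K _ h0 h1, stabilizer_smul_eq_stabilizer_map_conj,
    (stabilizer_U_234_and_orbit_U_234 K).1, Psi_map_conj _ h0 h1]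

end Orbit

/-- The six-element set `{U_{(a,b,c)} : (a,b,c) ∈ P₃}` is stable under the
action of `S₅`, consists of a single `S₅`-orbit, and the stabilizer of `U_{(a,b,c)}` is
exactly the order-20 subgroup `Ψ(a,b,c)`. -/
theorem USet_orbit_and_stabilizer (K : Type) [Field K] [CharP K 3] :
    (USet K).ncard = 6 ∧
    (∀ σ : Equiv.Perm (Fin 5), ∀ u ∈ USet K, act5 K σ u ∈ USet K) ∧
    (∀ u ∈ USet K, ∀ v ∈ USet K, ∃ σ : Equiv.Perm (Fin 5), act5 K σ u = v) ∧
    (∀ a b c : Fin 5, IsP3 a b c →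
      ∀ σ : Equiv.Perm (Fin 5), act5 K σ (U K a b c) = U K a b c ↔ σ ∈ Psi a b c) := by
  have horbit := (stabilizer_U_234_and_orbit_U_234 K).2
  refine ⟨?_, ?_, ?_, ?_⟩
  · rw [USet_eq_range, Set.ncard_range_of_injective (perm_smul_U_234_injective K), Nat.card_fin]
  · intro σ u hu
    rw [← horbit] at hu ⊢
    exact mem_orbit_of_mem_orbit σ hu
  · intro u hu v hv
    rw [← horbit] at hu hv
    obtain ⟨g, rfl⟩ := hu
    obtain ⟨h, rfl⟩ := hv
    exact ⟨h * g⁻¹, by rw [← perm_smul_def, smul_smul, inv_mul_cancel_right]⟩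
  · intro a b c habc σ
    rw [← stabilizer_U K habc]
    exact Iff.rfl
end
end

section
/- Let p be a prime, k a field of characteristic p, R a commutative k-algebra, S a finite set, c : S → k, and v : S → R. Then (Σ_{y∈S} c(y)·v(y))^{p−1} = − Σ_b (Π_{y∈S} b(y)!)^{−1}·Π_{y∈S} (c(y)·v(y))^{b(y)}, where the sum is over all functions b : S → ℕ with Σ_{y∈S} b(y) = p − 1, and (Π_{y∈S} b(y)!)^{−1} denotes the inverse in k of the image of the integer Π_{y∈S} b(y)! (which is invertible in k since each b(y) ≤ p − 1 < p). -/
/-!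
By the multinomial theorem the coefficient of `∏ y, (c y • v y) ^ b y` in the expansion of
`(∑ y, c y • v y) ^ (p - 1)` is the multinomial coefficient `(p - 1)! / ∏ y, (b y)!`, and by
Wilson's theorem `(p - 1)! = -1` in characteristic `p`.
-/

open Finset Nat

theorem CharP.natCast_factorial_pred_eq_neg_one {k : Type*} [Ring k] (p : ℕ) [CharP k p]
    (hp : p.Prime) : ((p - 1)! : k) = -1 := by
  have := Fact.mk hp
  rw [← map_natCast (ZMod.castHom (dvd_refl p) k), ZMod.wilsons_lemma, map_neg, map_one]

theorem CharP.natCast_multinomial_eq_neg_inv_prod_factorial {k ι : Type*} [Field k] (p : ℕ)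
    [CharP k p] (hp : p.Prime) {s : Finset ι} {b : ι → ℕ} (hb : ∑ i ∈ s, b i = p - 1) :
    (multinomial s b : k) = -((∏ i ∈ s, (b i)! : ℕ) : k)⁻¹ := by
  have h : ((∏ i ∈ s, (b i)! : ℕ) : k) * multinomial s b = -1 := by
    rw [← Nat.cast_mul, multinomial_spec, hb, CharP.natCast_factorial_pred_eq_neg_one p hp]
  rw [← neg_eq_iff_eq_neg]
  exact eq_inv_of_mul_eq_one_right (by rw [mul_neg, h, neg_neg])

theorem Finset.coe_piAntidiag_univ {ι : Type*} [Fintype ι] [DecidableEq ι] (n : ℕ) :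
    ((univ : Finset ι).piAntidiag n : Set (ι → ℕ)) = {b | ∑ i, b i = n} := by
  ext b
  simp

/-- In characteristic `p`, for `ℓ = Σ_{y∈S} c(y)·v(y)` one has
`ℓ^{p−1} = − Σ_b (Π_y b(y)!)⁻¹ · Π_y (c(y)·v(y))^{b(y)}`, the sum being over all
`b : S → ℕ` with `Σ_y b(y) = p − 1`. -/
theorem pow_pred_eq_neg_sum (p : ℕ) (hp : p.Prime) (k : Type) [Field k] [CharP k p]
    (R : Type) [CommRing R] [Algebra k R]
    (S : Type) [Fintype S] (c : S → k) (v : S → R) :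
    (∑ y : S, c y • v y) ^ (p - 1) =
      - ∑ᶠ b ∈ {b : S → ℕ | ∑ y : S, b y = p - 1},
          (((∏ y : S, (b y).factorial : ℕ) : k))⁻¹ • ∏ y : S, (c y • v y) ^ b y := by
  classical
  rw [← coe_piAntidiag_univ, finsum_mem_coe_finset, sum_pow_eq_sum_piAntidiag, ← sum_neg_distrib]
  refine sum_congr rfl fun b hb => ?_
  rw [← map_natCast (algebraMap k R), ← Algebra.smul_def,
    CharP.natCast_multinomial_eq_neg_inv_prod_factorial p hp (mem_piAntidiag.1 hb).1, neg_smul]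
end
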